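/- Let n ≥ 3 and P as above. For each j ∈ {1,…,n-2}, the real part of the field X_{-j} = ∂/∂z_j - ζ ∂/∂z_{j+1} + 2 z_{n-j} ∂/∂w is tangent to M_0 = {Re w = P}; equivalently, the polynomial identity ∂P/∂x_j - s ∂P/∂x_{j+1} = 2 x_{n-j} holds, and for j = n-1 (the field X_{1-n} = ∂/∂z_{n-1} + 2z_1 ∂/∂w) one has ∂P/∂x_{n-1} = 2x_1. -/

import Mathlib

open scoped BigOperators

/-- Index `k` as an element of `Fin (n+1)` (coordinates `(w, z_1, …, z_{n-1}, ζ)`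
of `ℂ^{n+1}`: `w` is index `0`, `z_j` is index `j`, `ζ` is index `n`). -/
def idx (n k : ℕ) : Fin (n + 1) := ⟨k % (n + 1), Nat.mod_lt _ (Nat.succ_pos n)⟩

/-- `P(x_1,…,x_{n-1},s) = Σ_{0<j<j+k≤n} x_j x_k s^{n-j-k}` with `x_j = Re z_j`
and `s = Re ζ`, as a function on `ℂ^{n+1}`. -/
noncomputable def Pmod (n : ℕ) : (Fin (n + 1) → ℂ) → ℝ :=
  fun p => ∑ j : Fin (n + 1), ∑ k : Fin (n + 1),
    if 1 ≤ (j : ℕ) ∧ 1 ≤ (k : ℕ) ∧ (j : ℕ) + (k : ℕ) ≤ n then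
      (p j).re * (p k).re * ((p (idx n n)).re) ^ (n - (j : ℕ) - (k : ℕ))
    else 0

/-- Defining function `ρ = Re w - P` of the model hypersurface `M₀ = {ρ = 0}`. -/
noncomputable def rho (n : ℕ) : (Fin (n + 1) → ℂ) → ℝ :=
  fun p => (p (idx n 0)).re - Pmod n p

/-- The field `X_{-j} = ∂/∂z_j - ζ ∂/∂z_{j+1} + 2 z_{n-j} ∂/∂w` for
`1 ≤ j ≤ n-2`, and `X_{1-n} = ∂/∂z_{n-1} + 2 z_1 ∂/∂w` for `j = n-1`. -/
noncomputable def vfX (n j : ℕ) : (Fin (n + 1) → ℂ) → (Fin (n + 1) → ℂ) :=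
  fun p =>
    (Pi.single (idx n j) 1 : Fin (n + 1) → ℂ)
      + (if j + 1 ≤ n - 1 then
          (-(p (idx n n))) • (Pi.single (idx n (j + 1)) 1 : Fin (n + 1) → ℂ) else 0)
      + (2 * p (idx n (n - j))) • (Pi.single (idx n 0) 1 : Fin (n + 1) → ℂ)

/-- `P` as a function of the real variables `(x_1, …, x_{n-1}, s)`; the
variable `x_j` sits at index `j` of `Fin (n+1)` and `s` at index `n`
(index `0` is unused). -/
noncomputable def Preal (n : ℕ) : (Fin (n + 1) → ℝ) → ℝ :=
  fun y => ∑ j : Fin (n + 1), ∑ k : Fin (n + 1),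
    if 1 ≤ (j : ℕ) ∧ 1 ≤ (k : ℕ) ∧ (j : ℕ) + (k : ℕ) ≤ n then
      y j * y k * (y (idx n n)) ^ (n - (j : ℕ) - (k : ℕ))
    else 0

/-! `P` is a quadratic form in `x = (x_1, …, x_{n-1})` whose coefficients depend on `s`
only, so for `1 ≤ m < n` one has `∂P/∂x_m = 2 Q_m` with
`Q_m = Σ_{k ≥ 1, m + k ≤ n} x_k s^{n-m-k}` (`halfPartial`). In `Q_j - s Q_{j+1}` every term
cancels except `k = n - j`, which leaves `x_{n-j}`, and `Q_n = 0`. Tangency of `Re X_{-j}` to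
`{ρ = 0}`, `ρ = Re w - P`, is the same identity, because the `w`-component of `X_{-j}` is
`2 z_{n-j}`. -/

@[simp]
lemma idx_val {n k : ℕ} (h : k ≤ n) : (idx n k : ℕ) = k :=
  Nat.mod_eq_of_lt (Nat.lt_succ_of_le h)

open ContinuousLinearMap in
lemma hasFDerivAt_apply_mul_apply_mul_apply_pow {𝕜 ι : Type*} [NontriviallyNormedField 𝕜]
    [Fintype ι] (i k l : ι) (e : ℕ) (y : ι → 𝕜) :
    HasFDerivAt (fun y : ι → 𝕜 => y i * y k * y l ^ e)
      ((y i * y k) • (e • y l ^ (e - 1)) • proj (R := 𝕜) (φ := fun _ : ι => 𝕜) l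
        + y l ^ e • (y i • proj k + y k • proj i)) y :=
  ((hasFDerivAt_apply i y).mul (hasFDerivAt_apply k y)).mul ((hasFDerivAt_apply l y).pow e)

lemma differentiable_Preal (n : ℕ) : Differentiable ℝ (Preal n) :=
  Differentiable.fun_sum fun j _ => Differentiable.fun_sum fun k _ => by
    split_ifs <;> fun_prop

open ContinuousLinearMap in
lemma fderiv_Preal_apply (n : ℕ) (y v : Fin (n + 1) → ℝ) (hv : v (idx n n) = 0) :
    fderiv ℝ (Preal n) y v = ∑ j : Fin (n + 1), ∑ k : Fin (n + 1),
      if 1 ≤ (j : ℕ) ∧ 1 ≤ (k : ℕ) ∧ (j : ℕ) + (k : ℕ) ≤ n then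
        (v j * y k + v k * y j) * y (idx n n) ^ (n - (j : ℕ) - (k : ℕ))
      else 0 := by
  have h : HasFDerivAt (Preal n) (∑ j : Fin (n + 1), ∑ k : Fin (n + 1),
      if 1 ≤ (j : ℕ) ∧ 1 ≤ (k : ℕ) ∧ (j : ℕ) + (k : ℕ) ≤ n then
        (y j * y k) •
            ((n - (j : ℕ) - (k : ℕ)) • y (idx n n) ^ (n - (j : ℕ) - (k : ℕ) - 1)) •
              proj (R := ℝ) (φ := fun _ : Fin (n + 1) => ℝ) (idx n n)
        + y (idx n n) ^ (n - (j : ℕ) - (k : ℕ)) • (y j • proj k + y k • proj j)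
      else 0) y := by
    refine HasFDerivAt.fun_sum fun j _ => HasFDerivAt.fun_sum fun k _ => ?_
    split_ifs
    · exact hasFDerivAt_apply_mul_apply_mul_apply_pow j k (idx n n) _ y
    · exact hasFDerivAt_const 0 y
  rw [h.fderiv]
  simp only [sum_apply, apply_ite (fun L : (Fin (n + 1) → ℝ) →L[ℝ] ℝ => L v)]
  refine Finset.sum_congr rfl fun j _ => Finset.sum_congr rfl fun k _ => ?_
  split_ifs
  · simp [hv]
    ring
  · rfl

lemma fderiv_rho_apply (n : ℕ) (p w : Fin (n + 1) → ℂ) :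
    fderiv ℝ (rho n) p w
      = (w (idx n 0)).re - fderiv ℝ (Preal n) (fun i => (p i).re) (fun i => (w i).re) := by
  let re : (Fin (n + 1) → ℂ) →L[ℝ] (Fin (n + 1) → ℝ) :=
    .pi fun i => Complex.reCLM.comp (.proj i)
  have h : HasFDerivAt (fun q => (q (idx n 0)).re - Preal n (re q))
      (Complex.reCLM.comp (.proj (idx n 0)) - (fderiv ℝ (Preal n) (re p)).comp re) p :=
    (Complex.reCLM.comp (.proj (R := ℝ) (φ := fun _ => ℂ) (idx n 0))).hasFDerivAt.fun_sub
      ((differentiable_Preal n (re p)).hasFDerivAt.comp p re.hasFDerivAt)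
  rw [show rho n = fun q => (q (idx n 0)).re - Preal n (re q) from rfl, h.fderiv]
  rfl

noncomputable def halfPartial (n : ℕ) (y : Fin (n + 1) → ℝ) (j : ℕ) : ℝ :=
  ∑ k : Fin (n + 1), if 1 ≤ j ∧ 1 ≤ (k : ℕ) ∧ j + (k : ℕ) ≤ n then
    y k * y (idx n n) ^ (n - j - (k : ℕ)) else 0

lemma fderiv_Preal_apply_eq_two_mul_sum (n : ℕ) (y v : Fin (n + 1) → ℝ)
    (hv : v (idx n n) = 0) :
    fderiv ℝ (Preal n) y v = 2 * ∑ j : Fin (n + 1), v j * halfPartial n y j := by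
  have sum_swap : (∑ j : Fin (n + 1), ∑ k : Fin (n + 1),
      if 1 ≤ (j : ℕ) ∧ 1 ≤ (k : ℕ) ∧ (j : ℕ) + (k : ℕ) ≤ n then
        v k * (y j * y (idx n n) ^ (n - (j : ℕ) - (k : ℕ))) else 0)
      = ∑ j : Fin (n + 1), ∑ k : Fin (n + 1),
      if 1 ≤ (j : ℕ) ∧ 1 ≤ (k : ℕ) ∧ (j : ℕ) + (k : ℕ) ≤ n then
        v j * (y k * y (idx n n) ^ (n - (j : ℕ) - (k : ℕ))) else 0 := by
    rw [Finset.sum_comm]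
    refine Finset.sum_congr rfl fun j _ => Finset.sum_congr rfl fun k _ => ?_
    rw [Nat.sub_right_comm]
    exact if_congr (by omega) rfl rfl
  simp only [fderiv_Preal_apply n y v hv, add_mul, ite_add_zero, Finset.sum_add_distrib,
    halfPartial, Finset.mul_sum, mul_ite, mul_zero, mul_assoc, two_mul]
  rw [sum_swap]

lemma fderiv_Preal_single (n : ℕ) (y : Fin (n + 1) → ℝ) {m : ℕ} (hm : m < n) :
    fderiv ℝ (Preal n) y (Pi.single (idx n m) 1) = 2 * halfPartial n y m := by
  have hmn : idx n n ≠ idx n m := by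
    simp [Fin.ext_iff, idx_val hm.le, hm.ne']
  rw [fderiv_Preal_apply_eq_two_mul_sum n y _ (Pi.single_eq_of_ne hmn 1)]
  simp [Pi.single_apply, idx_val hm.le]

@[simp]
lemma halfPartial_zero (n : ℕ) (y : Fin (n + 1) → ℝ) : halfPartial n y 0 = 0 :=
  Finset.sum_eq_zero fun _ _ => if_neg (by omega)

@[simp]
lemma halfPartial_self (n : ℕ) (y : Fin (n + 1) → ℝ) : halfPartial n y n = 0 :=
  Finset.sum_eq_zero fun _ _ => if_neg (by omega)

lemma halfPartial_sub_mul_halfPartial_succ (n : ℕ) (y : Fin (n + 1) → ℝ) {j : ℕ}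
    (hj : 1 ≤ j) (hjn : j < n) :
    halfPartial n y j - y (idx n n) * halfPartial n y (j + 1) = y (idx n (n - j)) := by
  rw [halfPartial, halfPartial, Finset.mul_sum, ← Finset.sum_sub_distrib]
  have term : ∀ k : Fin (n + 1),
      ((if 1 ≤ j ∧ 1 ≤ (k : ℕ) ∧ j + (k : ℕ) ≤ n then
        y k * y (idx n n) ^ (n - j - (k : ℕ)) else 0) -
      y (idx n n) * if 1 ≤ j + 1 ∧ 1 ≤ (k : ℕ) ∧ j + 1 + (k : ℕ) ≤ n then
        y k * y (idx n n) ^ (n - (j + 1) - (k : ℕ)) else 0)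
      = if k = idx n (n - j) then y k else 0 := by
    intro k
    have hk : k = idx n (n - j) ↔ (k : ℕ) = n - j := by rw [Fin.ext_iff, idx_val (by omega)]
    simp only [hk]
    split_ifs <;> try omega
    · rw [show n - j - (k : ℕ) = n - (j + 1) - k + 1 by omega, pow_succ]
      ring
    · rw [show n - j - (k : ℕ) = 0 by omega]
      simp
    · simp
  rw [Finset.sum_congr rfl fun k _ => term k]
  simp

lemma halfPartial_pred (n : ℕ) (y : Fin (n + 1) → ℝ) (hn : 2 ≤ n) :
    halfPartial n y (n - 1) = y (idx n 1) := by
  have h := halfPartial_sub_mul_halfPartial_succ n y (j := n - 1) (by omega) (by omega)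
  rwa [Nat.sub_add_cancel (by omega), halfPartial_self, mul_zero, sub_zero,
    Nat.sub_sub_self (by omega)] at h

lemma fderiv_rho_vfX (n j : ℕ) (hj : 1 ≤ j) (hjn : j < n) (p : Fin (n + 1) → ℂ) :
    fderiv ℝ (rho n) p (vfX n j p) = 0 := by
  have hj0 : idx n j ≠ idx n 0 := by simp [Fin.ext_iff, idx_val hjn.le]; omega
  have hNj : idx n n ≠ idx n j := by simp [Fin.ext_iff, idx_val hjn.le]; omega
  have hN0 : idx n n ≠ idx n 0 := by simp [Fin.ext_iff]; omega
  by_cases hc : j < n - 1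
  · have hj1 : idx n (j + 1) ≠ idx n 0 := by
      simp [Fin.ext_iff, idx_val (show j + 1 ≤ n by omega)]
    have hNj1 : idx n n ≠ idx n (j + 1) := by
      simp [Fin.ext_iff, idx_val (show j + 1 ≤ n by omega)]; omega
    rw [fderiv_rho_apply,
      fderiv_Preal_apply_eq_two_mul_sum _ _ _ (by simp [vfX, hc, hNj, hNj1, hN0])]
    simp [vfX, hc, Pi.single_apply, add_mul, Finset.sum_add_distrib, hj0, hj1, ite_mul,
      apply_ite Complex.re, idx_val hjn.le, idx_val (show j + 1 ≤ n by omega)]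
    linear_combination (-2) * halfPartial_sub_mul_halfPartial_succ n (fun i => (p i).re) hj hjn
  · obtain rfl : j = n - 1 := by omega
    rw [fderiv_rho_apply, fderiv_Preal_apply_eq_two_mul_sum _ _ _ (by simp [vfX, hNj, hN0])]
    simp [vfX, Pi.single_apply, add_mul, Finset.sum_add_distrib, hj0, ite_mul,
      apply_ite Complex.re, halfPartial_pred n _ (show 2 ≤ n by omega),
      Nat.sub_sub_self (show 1 ≤ n by omega)]

theorem X_tangent_to_model (n : ℕ) (hn : 3 ≤ n) :
    (∀ j : ℕ, 1 ≤ j → j ≤ n - 1 →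
      ∀ p : Fin (n + 1) → ℂ, fderiv ℝ (rho n) p (vfX n j p) = 0) ∧
    (∀ j : ℕ, 1 ≤ j → j ≤ n - 2 → ∀ y : Fin (n + 1) → ℝ,
      fderiv ℝ (Preal n) y (Pi.single (idx n j) 1)
        - y (idx n n) * fderiv ℝ (Preal n) y (Pi.single (idx n (j + 1)) 1)
        = 2 * y (idx n (n - j))) ∧
    (∀ y : Fin (n + 1) → ℝ,
      fderiv ℝ (Preal n) y (Pi.single (idx n (n - 1)) 1) = 2 * y (idx n 1)) := by
  refine ⟨fun j hj hjn p => fderiv_rho_vfX n j hj (by omega) p,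
    fun j hj hjn y => ?_, fun y => ?_⟩
  · rw [fderiv_Preal_single n y (by omega), fderiv_Preal_single n y (by omega)]
    linear_combination 2 * halfPartial_sub_mul_halfPartial_succ n y hj (by omega)
  · rw [fderiv_Preal_single n y (by omega), halfPartial_pred n y (by omega)]
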